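/- For any polynomial p with real coefficients, the number of positive real roots of p counted with multiplicity is at most the number of sign changes in the sequence of nonzero coefficients of p. -/

import Mathlib

/-!
Dividing out a positive root `r` lowers the number of sign changes by at least one, because
multiplying by `X - C r` adds one; Mathlib carries this out for `Polynomial.signVariations`, which
reads the coefficient signs from the leading coefficient down and takes the length of their
destuttered list. Both counts are the number of adjacent unequal signs in the list of nonzero
coefficients (for nonzero reals, `a * b < 0` exactly when the signs differ), and that number does
not change when the list is reversed.
-/

open Polynomial

/-- The list of nonzero coefficients of a real polynomial, in order. -/
noncomputable def nonzeroCoeffList (p : ℝ[X]) : List ℝ :=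
  ((List.range (p.natDegree + 1)).map p.coeff).filter (fun a => decide (a ≠ 0))

/-- The number of sign changes in the sequence of nonzero coefficients. -/
noncomputable def signChanges (p : ℝ[X]) : ℕ :=
  ((nonzeroCoeffList p).zip (nonzeroCoeffList p).tail).countP
    (fun ab => decide (ab.1 * ab.2 < 0))

theorem mul_neg_iff_sign_ne {R : Type*} [Ring R] [LinearOrder R] [IsStrictOrderedRing R]
    {a b : R} (ha : a ≠ 0) (hb : b ≠ 0) : a * b < 0 ↔ SignType.sign a ≠ SignType.sign b := by
  rcases ha.lt_or_gt with ha | ha <;> rcases hb.lt_or_gt with hb | hb <;>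
    simp [mul_neg_iff, ha, hb, ha.not_gt, hb.not_gt]

namespace List

variable {α : Type*}

theorem zip_dropLast_tail (l : List α) : l.dropLast.zip l.tail = l.zip l.tail := by
  induction l with
  | nil => rfl
  | cons a t ih =>
    cases t with
    | nil => rfl
    | cons b s => simpa using ih

theorem zip_tail_reverse (l : List α) :
    l.reverse.zip l.reverse.tail = ((l.zip l.tail).map Prod.swap).reverse := by
  calc l.reverse.zip l.reverse.tail = l.reverse.dropLast.zip l.reverse.tail :=
        (zip_dropLast_tail _).symm
    _ = (l.tail.zip l.dropLast).reverse := by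
        rw [dropLast_reverse, tail_reverse, zip_eq_zipWith, zip_eq_zipWith,
          reverse_zipWith (by simp)]
    _ = ((l.zip l.tail).map Prod.swap).reverse := by rw [← zip_dropLast_tail l, zip_swap]

theorem countP_zip_tail_reverse (l : List α) (r : α → α → Prop) [DecidableRel r]
    [Std.Symm r] :
    (l.reverse.zip l.reverse.tail).countP (fun ab => r ab.1 ab.2) =
      (l.zip l.tail).countP (fun ab => r ab.1 ab.2) := by
  rw [zip_tail_reverse, countP_reverse, countP_map]
  exact countP_congr fun ab _ => by simpa using comm

variable [DecidableEq α]

theorem length_destutter'_ne (a : α) (l : List α) :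
    (l.destutter' (· ≠ ·) a).length = ((a :: l).zip l).countP (fun ab => ab.1 ≠ ab.2) + 1 := by
  induction l generalizing a with
  | nil => rfl
  | cons b l ih =>
    by_cases hab : a = b
    · subst hab
      simp [ih]
    · simp [hab, ih]

theorem length_destutter_ne_sub_one (l : List α) :
    (l.destutter (· ≠ ·)).length - 1 = (l.zip l.tail).countP (fun ab => ab.1 ≠ ab.2) := by
  cases l with
  | nil => rfl
  | cons a l => simp [destutter_cons', length_destutter'_ne]

theorem countP_mul_neg_zip_tail_eq_countP_sign_ne {R : Type*} [Ring R] [LinearOrder R]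
    [IsStrictOrderedRing R] (l : List R) (hl : ∀ a ∈ l, a ≠ 0) :
    (l.zip l.tail).countP (fun ab => ab.1 * ab.2 < 0) =
      ((l.map SignType.sign).zip (l.map SignType.sign).tail).countP (fun ab => ab.1 ≠ ab.2) := by
  rw [← map_tail, zip_map, countP_map]
  refine countP_congr fun ab hab => ?_
  obtain ⟨h₁, h₂⟩ := of_mem_zip hab
  simpa using mul_neg_iff_sign_ne (hl _ h₁) (hl _ (mem_of_mem_tail h₂))

end List

namespace Polynomial

theorem coeffList_eq_reverse_map_range {R : Type*} [Semiring R] {p : R[X]} (hp : p ≠ 0) :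
    p.coeffList = ((List.range (p.natDegree + 1)).map p.coeff).reverse := by
  rw [coeffList, withBotSucc_degree_eq_natDegree_add_one hp, List.map_reverse]

end Polynomial

theorem signChanges_eq_signVariations (p : ℝ[X]) : signChanges p = p.signVariations := by
  rcases eq_or_ne p 0 with rfl | hp
  · simp [signChanges, nonzeroCoeffList]
  have hsigns : ((p.coeffList.map SignType.sign).filter (· ≠ 0)) =
      ((nonzeroCoeffList p).map SignType.sign).reverse := by
    simp [coeffList_eq_reverse_map_range hp, nonzeroCoeffList, List.filter_map, Function.comp_def]
  have hnz : ∀ a ∈ nonzeroCoeffList p, a ≠ 0 := fun a ha => by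
    simpa using (List.mem_filter.mp ha).2
  rw [signVariations, hsigns, List.length_destutter_ne_sub_one, List.countP_zip_tail_reverse,
    signChanges, List.countP_mul_neg_zip_tail_eq_countP_sign_ne _ hnz]

theorem descartes_rule_of_signs_general (p : ℝ[X]) :
    (p.roots.filter (fun x => 0 < x)).card ≤ signChanges p := by
  rw [← Multiset.countP_eq_card_filter, signChanges_eq_signVariations]
  exact roots_countP_pos_le_signVariations p

/-- Descartes' rule of signs (inequality form): the number of positive real roots
of a real polynomial, counted with multiplicity, is at most the number of sign
changes in its sequence of nonzero coefficients. -/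
theorem descartes_rule_of_signs (p : ℝ[X]) (hp : p ≠ 0) :
    (p.roots.filter (fun x => 0 < x)).card ≤ signChanges p :=
  descartes_rule_of_signs_general p
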